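/- For every Laver tree S ⊆ ω^{<ω} and every partition of [S] into finitely many Borel sets, [S] = A_0 ∪ … ∪ A_{n-1}, there is a Laver tree U ⊆ S with the same stem as S and an index i < n such that [U] ⊆ A_i. -/

import Mathlib

open Set

/-- The initial segment `r ↾ n` of a point of Baire space, as a finite sequence. -/
def seqTake (r : ℕ → ℕ) (n : ℕ) : List ℕ := List.ofFn fun i : Fin n => r i

/-- `[T]`, the set of infinite branches of a tree `T ⊆ ω^{<ω}`. -/
def branches (T : Set (List ℕ)) : Set (ℕ → ℕ) := {r | ∀ n, seqTake r n ∈ T}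

/-- `T` is a Laver tree with stem `s`: `T` is closed under initial segments, `s ∈ T` is
comparable with every element of `T`, and every `t ∈ T` extending `s` has infinitely many
immediate successors in `T`. -/
def IsLaverTreeWithStem (T : Set (List ℕ)) (s : List ℕ) : Prop :=
  s ∈ T ∧ (∀ t ∈ T, ∀ u : List ℕ, u <+: t → u ∈ T) ∧
    (∀ t ∈ T, t <+: s ∨ s <+: t) ∧
    (∀ t ∈ T, s <+: t → {n : ℕ | t ++ [n] ∈ T}.Infinite)

/-! Call `A` Laver-decidable if every Laver tree has a Laver subtree with the same stem whose
branches lie all in `A` or all outside `A`. Call a node good if it is the stem of a Laver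
subtree with branches in `A`; a node with infinitely many good successors is good, since the
witnessing subtrees amalgamate. So if the stem is not good, pruning every good node leaves a
Laver subtree with no good node at all. When `A` is open this subtree misses `A`: a branch in
`A` passes through a node above which every branch lies in `A`, and that node would be good.
For `⋃ k, A k` the same argument is run inside a fusion tree that, above each node at height
`k` over the stem, lies inside `A k` or misses it. Hence the decidable sets form a σ-algebra
containing the open sets, so every Borel set is decidable, and a finite cover is handled by
deciding its pieces one at a time. -/

theorem seqTake_succ (r : ℕ → ℕ) (m : ℕ) : seqTake r (m + 1) = seqTake r m ++ [r m] :=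
  List.ofFn_succ_last

@[simp]
theorem length_seqTake (r : ℕ → ℕ) (m : ℕ) : (seqTake r m).length = m :=
  List.length_ofFn

theorem seqTake_prefix_seqTake (r : ℕ → ℕ) {m m' : ℕ} (h : m ≤ m') :
    seqTake r m <+: seqTake r m' := by
  induction m', h using Nat.le_induction with
  | base => exact List.prefix_rfl
  | succ m' _ ih => exact ih.trans (seqTake_succ r m' ▸ List.prefix_append _ _)

theorem seqTake_eq_seqTake_iff {r r' : ℕ → ℕ} {m : ℕ} :
    seqTake r' m = seqTake r m ↔ r' ∈ PiNat.cylinder r m := by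
  simp [seqTake, List.ofFn_inj, funext_iff, PiNat.mem_cylinder_iff, Fin.forall_iff]

theorem branches_mono {U T : Set (List ℕ)} (h : U ⊆ T) : branches U ⊆ branches T :=
  fun _ hr m => h (hr m)

theorem nonempty_branches_of_forall_exists_concat_mem {T : Set (List ℕ)} (h₀ : [] ∈ T)
    (h : ∀ t ∈ T, ∃ n, t ++ [n] ∈ T) : (branches T).Nonempty := by
  choose! f hf using h
  let g : ℕ → List ℕ := fun k => Nat.rec [] (fun _ t => t ++ [f t]) k
  have hg : ∀ k, g k ∈ T ∧ seqTake (fun k => f (g k)) k = g k := by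
    intro k
    induction k with
    | zero => exact ⟨h₀, rfl⟩
    | succ k ih => exact ⟨hf _ ih.1, by rw [seqTake_succ, ih.2]⟩
  exact ⟨_, fun k => (hg k).2 ▸ (hg k).1⟩

namespace IsLaverTreeWithStem

variable {T : Set (List ℕ)} {s : List ℕ}

theorem mem_of_prefix (hT : IsLaverTreeWithStem T s) {t p : List ℕ} (ht : t ∈ T)
    (hp : p <+: t) : p ∈ T :=
  hT.2.1 t ht p hp

theorem stem_prefix (hT : IsLaverTreeWithStem T s) {t : List ℕ} (ht : t ∈ T)
    (hlen : s.length ≤ t.length) : s <+: t := by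
  rcases hT.2.2.1 t ht with h | h
  · rw [h.eq_of_length (le_antisymm h.length_le hlen)]
  · exact h

theorem stem_prefix_seqTake (hT : IsLaverTreeWithStem T s) {r : ℕ → ℕ} (hr : r ∈ branches T)
    {m : ℕ} (hm : s.length ≤ m) : s <+: seqTake r m :=
  hT.stem_prefix (hr m) (by simpa using hm)

theorem exists_concat_mem (hT : IsLaverTreeWithStem T s) {t : List ℕ} (ht : t ∈ T) :
    ∃ n, t ++ [n] ∈ T := by
  rcases hT.2.2.1 t ht with ⟨_ | ⟨x, d⟩, rfl⟩ | hst
  · exact (hT.2.2.2 t ht (by simp)).nonempty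
  · exact ⟨x, hT.mem_of_prefix hT.1 ⟨d, by simp⟩⟩
  · exact (hT.2.2.2 t ht hst).nonempty

theorem nonempty_branches (hT : IsLaverTreeWithStem T s) : (branches T).Nonempty :=
  nonempty_branches_of_forall_exists_concat_mem (hT.mem_of_prefix hT.1 List.nil_prefix)
    fun _ => hT.exists_concat_mem

end IsLaverTreeWithStem

def subtreeAt (T : Set (List ℕ)) (t : List ℕ) : Set (List ℕ) :=
  {u ∈ T | u <+: t ∨ t <+: u}

theorem subtreeAt_subset (T : Set (List ℕ)) (t : List ℕ) : subtreeAt T t ⊆ T :=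
  fun _ h => h.1

theorem mem_branches_subtreeAt {T : Set (List ℕ)} {t : List ℕ} {r : ℕ → ℕ} :
    r ∈ branches (subtreeAt T t) ↔ r ∈ branches T ∧ seqTake r t.length = t := by
  refine ⟨fun hr => ⟨branches_mono (subtreeAt_subset T t) hr, ?_⟩, fun ⟨hr, hrt⟩ m => ⟨hr m, ?_⟩⟩
  · rcases (hr t.length).2 with h | h
    · exact h.eq_of_length (by simp)
    · exact (h.eq_of_length (by simp)).symm
  · rw [← hrt]
    rcases le_total m t.length with hm | hm
    · exact Or.inl (seqTake_prefix_seqTake r hm)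
    · exact Or.inr (seqTake_prefix_seqTake r hm)

theorem IsLaverTreeWithStem.subtreeAt {T : Set (List ℕ)} {s t : List ℕ}
    (hT : IsLaverTreeWithStem T s) (ht : t ∈ T) (hst : s <+: t) :
    IsLaverTreeWithStem (subtreeAt T t) t := by
  refine ⟨⟨ht, Or.inl List.prefix_rfl⟩, ?_, fun u hu => hu.2, ?_⟩
  · rintro u ⟨huT, hu⟩ p hp
    refine ⟨hT.mem_of_prefix huT hp, ?_⟩
    rcases hu with hu | hu
    · exact Or.inl (hp.trans hu)
    · exact List.prefix_or_prefix_of_prefix hp hu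
  · rintro u ⟨huT, -⟩ htu
    exact (hT.2.2.2 u huT (hst.trans htu)).mono
      fun n hn => ⟨hn, Or.inr (htu.trans (List.prefix_append u [n]))⟩

def IsGoodNode (T : Set (List ℕ)) (B : Set (ℕ → ℕ)) (t : List ℕ) : Prop :=
  ∃ V, IsLaverTreeWithStem V t ∧ V ⊆ T ∧ branches V ⊆ B

theorem IsGoodNode.mono {T T' : Set (List ℕ)} {B : Set (ℕ → ℕ)} {t : List ℕ}
    (h : IsGoodNode T B t) (hT : T ⊆ T') : IsGoodNode T' B t :=
  let ⟨V, hV, hVT, hVB⟩ := h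
  ⟨V, hV, hVT.trans hT, hVB⟩

theorem isGoodNode_of_branches_subtreeAt_subset {T : Set (List ℕ)} {B : Set (ℕ → ℕ)}
    {s t : List ℕ} (hT : IsLaverTreeWithStem T s) (ht : t ∈ T) (hst : s <+: t)
    (hB : branches (subtreeAt T t) ⊆ B) : IsGoodNode T B t :=
  ⟨subtreeAt T t, hT.subtreeAt ht hst, subtreeAt_subset T t, hB⟩

theorem IsLaverTreeWithStem.concat_prefix {X : Set (List ℕ)} {u t : List ℕ} {n : ℕ}
    (hX : IsLaverTreeWithStem X (u ++ [n])) (ht : t ∈ X) (hut : u <+: t) (htu : t ≠ u) :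
    u ++ [n] <+: t :=
  hX.stem_prefix ht <| by
    have := hut.length_le
    have : u.length ≠ t.length := fun h => htu (hut.eq_of_length h).symm
    simp only [List.length_append, List.length_singleton]
    omega

section Amalgamation

variable {V : ℕ → Set (List ℕ)} {u : List ℕ} {I : Set ℕ}

theorem isLaverTreeWithStem_biUnion (hI : I.Infinite)
    (hV : ∀ n ∈ I, IsLaverTreeWithStem (V n) (u ++ [n])) :
    IsLaverTreeWithStem (⋃ n ∈ I, V n) u := by
  have hu : ∀ n ∈ I, u ++ [n] ∈ ⋃ n ∈ I, V n := fun n hn => mem_biUnion hn (hV n hn).1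
  obtain ⟨n₀, hn₀⟩ := hI.nonempty
  refine ⟨mem_biUnion hn₀ ((hV n₀ hn₀).mem_of_prefix (hV n₀ hn₀).1 (List.prefix_append u [n₀])),
    ?_, ?_, ?_⟩
  · intro t ht p hp
    obtain ⟨n, hn, ht⟩ := mem_iUnion₂.1 ht
    exact mem_biUnion hn ((hV n hn).mem_of_prefix ht hp)
  · intro t ht
    obtain ⟨n, hn, ht⟩ := mem_iUnion₂.1 ht
    rcases (hV n hn).2.2.1 t ht with h | h
    · rcases List.prefix_concat_iff.1 h with rfl | h
      · exact Or.inr (List.prefix_append u [n])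
      · exact Or.inl h
    · exact Or.inr ((List.prefix_append u [n]).trans h)
  · intro t ht hut
    obtain ⟨n, hn, ht⟩ := mem_iUnion₂.1 ht
    by_cases htu : t = u
    · subst htu
      exact hI.mono hu
    · exact ((hV n hn).2.2.2 t ht ((hV n hn).concat_prefix ht hut htu)).mono
        fun m hm => mem_biUnion hn hm

theorem branches_biUnion_subset (hV : ∀ n ∈ I, IsLaverTreeWithStem (V n) (u ++ [n])) :
    branches (⋃ n ∈ I, V n) ⊆ ⋃ n ∈ I, branches (V n) := by
  intro r hr
  have hlong : ∀ m, r u.length ∈ I ∧ seqTake r (m + (u.length + 1)) ∈ V (r u.length) := by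
    intro m
    obtain ⟨n, hn, hmem⟩ := mem_iUnion₂.1 (hr (m + (u.length + 1)))
    have h₁ : u ++ [n] <+: seqTake r (m + (u.length + 1)) :=
      (hV n hn).stem_prefix hmem (by simp)
    have h₂ : seqTake r (u.length + 1) <+: seqTake r (m + (u.length + 1)) :=
      seqTake_prefix_seqTake r (by omega)
    have h₃ : u ++ [n] = seqTake r u.length ++ [r u.length] := by
      rw [← seqTake_succ]
      exact (List.prefix_of_prefix_length_le h₁ h₂ (by simp)).eq_of_length (by simp)
    obtain ⟨-, hnr⟩ := List.append_inj' h₃ rfl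
    obtain rfl : n = r u.length := List.singleton_inj.1 hnr
    exact ⟨hn, hmem⟩
  refine mem_biUnion (hlong 0).1 fun m => (hV _ (hlong 0).1).mem_of_prefix (hlong m).2 ?_
  exact seqTake_prefix_seqTake r (by omega)

theorem isGoodNode_of_infinite {T : Set (List ℕ)} {B : Set (ℕ → ℕ)}
    (h : {n | IsGoodNode T B (u ++ [n])}.Infinite) : IsGoodNode T B u := by
  choose! V hV hVT hVB using fun n (hn : n ∈ {n | IsGoodNode T B (u ++ [n])}) => hn
  exact ⟨⋃ n ∈ _, V n, isLaverTreeWithStem_biUnion h hV, iUnion₂_subset hVT,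
    (branches_biUnion_subset hV).trans (iUnion₂_subset hVB)⟩

end Amalgamation

theorem exists_laverTree_forall_not_isGoodNode {T : Set (List ℕ)} {s : List ℕ}
    {B : Set (ℕ → ℕ)} (hT : IsLaverTreeWithStem T s) (hs : ¬ IsGoodNode T B s) :
    ∃ T', IsLaverTreeWithStem T' s ∧ T' ⊆ T ∧ ∀ t ∈ T', s <+: t → ¬ IsGoodNode T B t := by
  refine ⟨{u ∈ T | ∀ p, s <+: p → p <+: u → ¬ IsGoodNode T B p}, ⟨?_, ?_, ?_, ?_⟩,
    fun u hu => hu.1, fun t ht hst => ht.2 t hst List.prefix_rfl⟩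
  · refine ⟨hT.1, fun p hsp hps => ?_⟩
    rwa [hps.eq_of_length (le_antisymm hps.length_le hsp.length_le)]
  · exact fun u hu p hp =>
      ⟨hT.mem_of_prefix hu.1 hp, fun p' hsp' hp' => hu.2 p' hsp' (hp'.trans hp)⟩
  · exact fun u hu => hT.2.2.1 u hu.1
  · intro u hu hsu
    have hgood : {n | IsGoodNode T B (u ++ [n])}.Finite :=
      Set.not_infinite.1 fun h => hu.2 u hsu List.prefix_rfl (isGoodNode_of_infinite h)
    refine ((hT.2.2.2 u hu.1 hsu).sdiff hgood).mono ?_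
    rintro n ⟨hnT, hngood⟩
    refine ⟨hnT, fun p hsp hp => ?_⟩
    rcases List.prefix_concat_iff.1 hp with rfl | hp
    · exact hngood
    · exact hu.2 p hsp hp

def IsLaverDecidable (A : Set (ℕ → ℕ)) : Prop :=
  ∀ T s, IsLaverTreeWithStem T s →
    ∃ U, IsLaverTreeWithStem U s ∧ U ⊆ T ∧ (branches U ⊆ A ∨ branches U ⊆ Aᶜ)

theorem isLaverDecidable_empty : IsLaverDecidable ∅ :=
  fun T _ hT => ⟨T, hT, subset_rfl, Or.inr fun _ _ h => h⟩

theorem IsLaverDecidable.compl {A : Set (ℕ → ℕ)} (h : IsLaverDecidable A) :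
    IsLaverDecidable Aᶜ := by
  intro T s hT
  obtain ⟨U, hU, hUT, hUA⟩ := h T s hT
  exact ⟨U, hU, hUT, by rwa [compl_compl, or_comm]⟩

theorem isLaverDecidable_of_isOpen {A : Set (ℕ → ℕ)} (hA : IsOpen A) : IsLaverDecidable A := by
  intro T s hT
  by_cases hs : IsGoodNode T A s
  · obtain ⟨V, hV, hVT, hVA⟩ := hs
    exact ⟨V, hV, hVT, Or.inl hVA⟩
  obtain ⟨T', hT', hT'T, hbad⟩ := exists_laverTree_forall_not_isGoodNode hT hs
  refine ⟨T', hT', hT'T, Or.inr fun r hr hrA => ?_⟩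
  obtain ⟨_, ⟨x, m, rfl⟩, hrx, hxA⟩ :=
    (PiNat.isTopologicalBasis_cylinders _).exists_subset_of_mem_open hrA hA
  rw [PiNat.mem_cylinder_iff_eq] at hrx
  set t := seqTake r (m + s.length)
  have hst : s <+: t := hT'.stem_prefix_seqTake hr (by omega)
  refine hbad t (hr _) hst ((isGoodNode_of_branches_subtreeAt_subset hT' (hr _) hst ?_).mono hT'T)
  intro r' hr'
  have hr't : r' ∈ PiNat.cylinder r (m + s.length) :=
    seqTake_eq_seqTake_iff.1 (by simpa [t] using (mem_branches_subtreeAt.1 hr').2)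
  exact hxA (hrx ▸ PiNat.cylinder_anti r (by omega) hr't)

section Fusion

variable (Q : List ℕ → Set (List ℕ) → Prop)

open Classical in
/-- The junk value `∅` when there is no Laver subtree of `X` with stem `t` satisfying `Q t`, so
a nonempty value is always one. -/
noncomputable def refineAt (X : Set (List ℕ)) (t : List ℕ) : Set (List ℕ) :=
  if h : ∃ Y, IsLaverTreeWithStem Y t ∧ Y ⊆ X ∧ Q t Y then h.choose else ∅

noncomputable def fusionNode (T : Set (List ℕ)) (s u : List ℕ) : Set (List ℕ) :=
  if s.length < u.length then
    refineAt Q (subtreeAt (fusionNode T s u.dropLast) u) u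
  else refineAt Q T s
termination_by u.length
decreasing_by simp only [List.length_dropLast]; omega

def fusion (T : Set (List ℕ)) (s : List ℕ) : Set (List ℕ) :=
  {u | u <+: s ∨ (s <+: u ∧ u ∈ fusionNode Q T s u)}

variable {Q} {T : Set (List ℕ)} {s : List ℕ}

theorem refineAt_subset (X : Set (List ℕ)) (t : List ℕ) : refineAt Q X t ⊆ X := by
  unfold refineAt
  split_ifs with h
  · exact h.choose_spec.2.1
  · exact empty_subset X

theorem refineAt_spec {X : Set (List ℕ)} {t : List ℕ} (h : (refineAt Q X t).Nonempty) :
    IsLaverTreeWithStem (refineAt Q X t) t ∧ Q t (refineAt Q X t) := by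
  unfold refineAt at h ⊢
  split_ifs with hY
  · exact ⟨hY.choose_spec.1, hY.choose_spec.2.2⟩
  · simp [hY] at h

theorem mem_refineAt (hQ : ∀ t X, IsLaverTreeWithStem X t →
      ∃ Y, IsLaverTreeWithStem Y t ∧ Y ⊆ X ∧ Q t Y)
    {X : Set (List ℕ)} {t : List ℕ} (hX : IsLaverTreeWithStem X t) : t ∈ refineAt Q X t := by
  unfold refineAt
  rw [dif_pos (hQ t X hX)]
  exact (hQ t X hX).choose_spec.1.1

theorem fusionNode_stem : fusionNode Q T s s = refineAt Q T s := by
  rw [fusionNode, if_neg (lt_irrefl _)]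

theorem fusionNode_concat {t : List ℕ} (hst : s <+: t) (n : ℕ) :
    fusionNode Q T s (t ++ [n]) =
      refineAt Q (subtreeAt (fusionNode Q T s t) (t ++ [n])) (t ++ [n]) := by
  rw [fusionNode, if_pos (by simpa using Nat.lt_succ_of_le hst.length_le), List.dropLast_concat]

theorem fusionNode_spec {u : List ℕ} (hsu : s <+: u) (hu : (fusionNode Q T s u).Nonempty) :
    IsLaverTreeWithStem (fusionNode Q T s u) u ∧ Q u (fusionNode Q T s u) := by
  rw [fusionNode] at hu ⊢
  split_ifs at hu ⊢ with h
  · exact refineAt_spec hu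
  · rw [← hsu.eq_of_length (le_antisymm hsu.length_le (not_lt.1 h))]
    exact refineAt_spec hu

theorem fusionNode_anti {t v : List ℕ} (hst : s <+: t) (htv : t <+: v) :
    fusionNode Q T s v ⊆ fusionNode Q T s t := by
  induction v using List.reverseRecOn with
  | nil => rw [List.prefix_nil.1 htv]
  | append_singleton v n ih =>
    rcases List.prefix_concat_iff.1 htv with rfl | htv
    · exact subset_rfl
    · rw [fusionNode_concat (hst.trans htv)]
      exact (refineAt_subset _ _).trans ((subtreeAt_subset _ _).trans (ih htv))

theorem fusion_subset (hT : IsLaverTreeWithStem T s) : fusion Q T s ⊆ T := by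
  rintro u (hus | ⟨hsu, hu⟩)
  · exact hT.mem_of_prefix hT.1 hus
  · exact refineAt_subset T s (fusionNode_stem (Q := Q) ▸ fusionNode_anti List.prefix_rfl hsu hu)

variable (hQ : ∀ t X, IsLaverTreeWithStem X t → ∃ Y, IsLaverTreeWithStem Y t ∧ Y ⊆ X ∧ Q t Y)
  (hT : IsLaverTreeWithStem T s)
include hQ hT

theorem mem_fusionNode_self {u : List ℕ} (hsu : s <+: u) (hu : u ∈ fusion Q T s) :
    u ∈ fusionNode Q T s u := by
  rcases hu with hus | ⟨-, hu⟩
  · rw [hus.eq_of_length (le_antisymm hus.length_le hsu.length_le), fusionNode_stem]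
    exact mem_refineAt hQ hT
  · exact hu

theorem isLaverTreeWithStem_fusion : IsLaverTreeWithStem (fusion Q T s) s := by
  refine ⟨Or.inl List.prefix_rfl, ?_, fun u hu => hu.imp id And.left, ?_⟩
  · rintro u (hus | ⟨hsu, hu⟩) p hpu
    · exact Or.inl (hpu.trans hus)
    · rcases List.prefix_or_prefix_of_prefix hpu hsu with hps | hsp
      · exact Or.inl hps
      · have hu' := fusionNode_anti hsp hpu hu
        exact Or.inr ⟨hsp, (fusionNode_spec hsp ⟨u, hu'⟩).1.mem_of_prefix hu' hpu⟩
  · intro u hu hsu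
    have hN := (fusionNode_spec hsu ⟨u, mem_fusionNode_self hQ hT hsu hu⟩).1
    refine (hN.2.2.2 u hN.1 List.prefix_rfl).mono fun n hn => Or.inr ⟨?_, ?_⟩
    · exact hsu.trans (List.prefix_append u [n])
    · rw [fusionNode_concat hsu]
      exact mem_refineAt hQ (hN.subtreeAt hn (List.prefix_append u [n]))

theorem subtreeAt_fusion_subset {t : List ℕ} (hst : s <+: t) (ht : t ∈ fusion Q T s) :
    subtreeAt (fusion Q T s) t ⊆ fusionNode Q T s t := by
  have htt := mem_fusionNode_self hQ hT hst ht
  rintro v ⟨hv, hvt | htv⟩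
  · exact (fusionNode_spec hst ⟨t, htt⟩).1.mem_of_prefix htt hvt
  · exact fusionNode_anti hst htv (mem_fusionNode_self hQ hT (hst.trans htv) hv)

theorem exists_laverTree_forall_subtreeAt_subset :
    ∃ U, IsLaverTreeWithStem U s ∧ U ⊆ T ∧
      ∀ t ∈ U, s <+: t → ∃ W, Q t W ∧ subtreeAt U t ⊆ W :=
  ⟨fusion Q T s, isLaverTreeWithStem_fusion hQ hT, fusion_subset hT, fun t ht hst =>
    ⟨_, (fusionNode_spec hst ⟨t, mem_fusionNode_self hQ hT hst ht⟩).2,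
      subtreeAt_fusion_subset hQ hT hst ht⟩⟩

end Fusion

theorem IsLaverDecidable.iUnion {A : ℕ → Set (ℕ → ℕ)} (hA : ∀ k, IsLaverDecidable (A k)) :
    IsLaverDecidable (⋃ k, A k) := by
  intro T s hT
  -- fuse so that above every node of height `k` over the stem the tree decides `A k`
  obtain ⟨U, hU, hUT, hdec⟩ := exists_laverTree_forall_subtreeAt_subset
    (Q := fun t W => branches W ⊆ A (t.length - s.length) ∨
      branches W ⊆ (A (t.length - s.length))ᶜ) (fun t X hX => hA _ X t hX) hT
  by_cases hs : IsGoodNode U (⋃ k, A k) s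
  · obtain ⟨V, hV, hVU, hVA⟩ := hs
    exact ⟨V, hV, hVU.trans hUT, Or.inl hVA⟩
  obtain ⟨U', hU', hU'U, hbad⟩ := exists_laverTree_forall_not_isGoodNode hU hs
  refine ⟨U', hU', hU'U.trans hUT, Or.inr fun r hr hrA => ?_⟩
  obtain ⟨k, hk⟩ := mem_iUnion.1 hrA
  set t := seqTake r (s.length + k)
  have htU : t ∈ U := hU'U (hr _)
  have hst : s <+: t := hU'.stem_prefix_seqTake hr (by omega)
  obtain ⟨W, hW, hUW⟩ := hdec t htU hst
  have hrW : r ∈ branches W :=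
    branches_mono hUW (mem_branches_subtreeAt.2 ⟨branches_mono hU'U hr, by simp [t]⟩)
  have hlen : t.length - s.length = k := by simp [t]
  rw [hlen] at hW
  have hWA : branches W ⊆ A k := hW.resolve_right fun h => h hrW hk
  exact hbad t (hr _) hst <| isGoodNode_of_branches_subtreeAt_subset hU htU hst <|
    (branches_mono hUW).trans (hWA.trans (subset_iUnion A k))

abbrev laverDecidableSpace : MeasurableSpace (ℕ → ℕ) where
  MeasurableSet' := IsLaverDecidable
  measurableSet_empty := isLaverDecidable_empty
  measurableSet_compl _ := IsLaverDecidable.compl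
  measurableSet_iUnion _ := IsLaverDecidable.iUnion

theorem isLaverDecidable_of_measurableSet {A : Set (ℕ → ℕ)} (hA : MeasurableSet A) :
    IsLaverDecidable A := by
  have hborel : borel (ℕ → ℕ) ≤ laverDecidableSpace :=
    MeasurableSpace.generateFrom_le fun _ => isLaverDecidable_of_isOpen
  exact hborel A (BorelSpace.measurable_eq (α := ℕ → ℕ) ▸ hA)

theorem exists_laverTree_branches_subset_of_subset_iUnion {n : ℕ} {A : Fin n → Set (ℕ → ℕ)}
    (hA : ∀ i, IsLaverDecidable (A i)) {T : Set (List ℕ)} {s : List ℕ}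
    (hT : IsLaverTreeWithStem T s) (hcover : branches T ⊆ ⋃ i, A i) :
    ∃ U, IsLaverTreeWithStem U s ∧ U ⊆ T ∧ ∃ i, branches U ⊆ A i := by
  induction n generalizing T with
  | zero =>
    obtain ⟨r, hr⟩ := hT.nonempty_branches
    simpa using hcover hr
  | succ n ih =>
    obtain ⟨U, hU, hUT, hU0 | hU0⟩ := hA 0 T s hT
    · exact ⟨U, hU, hUT, 0, hU0⟩
    have hUcover : branches U ⊆ ⋃ i : Fin n, A i.succ := by
      intro r hr
      have := hcover (branches_mono hUT hr)
      simp only [mem_iUnion, Fin.exists_fin_succ] at this ⊢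
      exact this.resolve_left (hU0 hr)
    obtain ⟨V, hV, hVU, i, hi⟩ := ih (fun i => hA i.succ) hU hUcover
    exact ⟨V, hV, hVU.trans hUT, i.succ, hi⟩

theorem laver_partition_general
    (S : Set (List ℕ)) (s : List ℕ) (hS : IsLaverTreeWithStem S s)
    (n : ℕ) (A : Fin n → Set (ℕ → ℕ))
    (hA_meas : ∀ i, MeasurableSet (A i))
    (hA_cover : branches S = ⋃ i, A i) :
    ∃ U : Set (List ℕ), IsLaverTreeWithStem U s ∧ U ⊆ S ∧
      ∃ i : Fin n, branches U ⊆ A i :=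
  exists_laverTree_branches_subset_of_subset_iUnion
    (fun i => isLaverDecidable_of_measurableSet (hA_meas i)) hS hA_cover.subset

/-- For every Laver tree `S` and every partition `[S] = A_0 ∪ … ∪ A_{n-1}` of its set of
branches into finitely many Borel sets there is a Laver tree `U ⊆ S` with the same stem
and an index `i < n` with `[U] ⊆ A_i`. -/
theorem laver_partition
    (S : Set (List ℕ)) (s : List ℕ) (hS : IsLaverTreeWithStem S s)
    (n : ℕ) (A : Fin n → Set (ℕ → ℕ))
    (hA_meas : ∀ i, MeasurableSet (A i))
    (hA_disj : Pairwise fun i j => Disjoint (A i) (A j))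
    (hA_cover : branches S = ⋃ i, A i) :
    ∃ U : Set (List ℕ), IsLaverTreeWithStem U s ∧ U ⊆ S ∧
      ∃ i : Fin n, branches U ⊆ A i :=
  laver_partition_general S s hS n A hA_meas hA_cover
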